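/- arXiv:2403.20166 — 5 statements merged into one kernel-verified Lean document; each statement's English description precedes it below -/
import Mathlib

section
/- Let E be a connected metric space, let U ⊆ E be an open set, let p ∈ U, and suppose that U \ {p} is a connected set. Then E \ {p} is also connected. -/
noncomputable section

/-- The Euclidean plane. -/
abbrev Plane := EuclideanSpace ℝ (Fin 2)

/-- Points `p` and `q` are `δ`-chained in `A`: there is a finite sequence of points of `A`
from `p` to `q` with consecutive distances `< δ`. -/
def IsChainedPts (δ : ℝ) (A : Set Plane) (p q : Plane) : Prop :=
  ∃ n : ℕ, ∃ r : Fin (n + 1) → Plane, (∀ i, r i ∈ A) ∧ r 0 = p ∧ r (Fin.last n) = q ∧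
    ∀ i : Fin n, dist (r i.castSucc) (r i.succ) < δ

/-- A set is `δ`-chained iff any two of its points are `δ`-chained in it. -/
def IsChainedSet (δ : ℝ) (A : Set Plane) : Prop :=
  ∀ p ∈ A, ∀ q ∈ A, IsChainedPts δ A p q

/-- The `δ`-chained component of the point `p` in the set `M`. -/
def chainedComponent (δ : ℝ) (M : Set Plane) (p : Plane) : Set Plane :=
  {q | q ∈ M ∧ IsChainedPts δ M p q}

/-- Distance `ρ(A, B)` between two sets: infimum of pairwise distances. -/
def setRho (A B : Set Plane) : ℝ :=
  sInf {d : ℝ | ∃ a ∈ A, ∃ b ∈ B, d = dist a b}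

/-- `D` is a connected component of the subspace `S`. -/
def IsConnCompOf {X : Type*} [TopologicalSpace X] (S D : Set X) : Prop :=
  ∃ x ∈ S, connectedComponentIn S x = D

/-- A simple closed curve: a subset of the plane homeomorphic to the unit circle. -/
def IsSimpleClosedCurve (C : Set Plane) : Prop :=
  Nonempty (C ≃ₜ (Metric.sphere (0 : Plane) 1 : Set Plane))

/-- A simple closed curve `C` separates `A` and `B` iff they lie in two different
connected components of the complement of `C`. -/
def Separates (C A B : Set Plane) : Prop :=
  ∃ D E : Set Plane, IsConnCompOf Cᶜ D ∧ IsConnCompOf Cᶜ E ∧ D ≠ E ∧ A ⊆ D ∧ B ⊆ E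

/-!
Split `{p}ᶜ` by open sets `u`, `v`. The preconnected set `U \ {p}` lies in one of them, say `u`.
Then `{p}ᶜ ∩ v` and `U ∪ ({p}ᶜ ∩ u)` are disjoint open sets covering `E`, so by connectedness of
`E` one of them is empty, i.e. the split is trivial. Only openness of `{p}ᶜ` and `U` and the fact
that they cover `E` matter.
-/

open Set

theorem IsOpen.isPreconnected_of_union_eq_univ {X : Type*} [TopologicalSpace X]
    [PreconnectedSpace X] {A B : Set X} (hA : IsOpen A) (hB : IsOpen B) (hcover : A ∪ B = univ)
    (hAB : IsPreconnected (A ∩ B)) : IsPreconnected A := by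
  rw [isPreconnected_iff_subset_of_disjoint]
  intro u v hu hv hAuv hAuv_disj
  wlog hABu : A ∩ B ⊆ u generalizing u v
  · have hABv : A ∩ B ⊆ v := by
      refine ((isPreconnected_iff_subset_of_disjoint.mp hAB) u v hu hv
        (inter_subset_left.trans hAuv) ?_).resolve_left hABu
      exact subset_empty_iff.mp (hAuv_disj ▸ inter_subset_inter_left _ inter_subset_left)
    exact (this v u hv hu (by rwa [union_comm]) (by rwa [inter_comm v]) hABv).symm
  have hsplit : univ ⊆ (A ∩ v) ∪ (B ∪ A ∩ u) := by
    intro x _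
    by_cases hxA : x ∈ A
    · rcases hAuv hxA with hxu | hxv
      exacts [Or.inr (Or.inr ⟨hxA, hxu⟩), Or.inl ⟨hxA, hxv⟩]
    · exact Or.inr (Or.inl ((hcover.symm ▸ mem_univ x).resolve_left hxA))
  have hdisj : Disjoint (A ∩ v) (B ∪ A ∩ u) := by
    rw [disjoint_iff_inter_eq_empty, ← subset_empty_iff, ← hAuv_disj]
    rintro x ⟨⟨hxA, hxv⟩, hxB | ⟨-, hxu⟩⟩
    exacts [⟨hxA, hABu ⟨hxA, hxB⟩, hxv⟩, ⟨hxA, hxu, hxv⟩]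
  rcases isPreconnected_univ.subset_or_subset (hA.inter hv) (hB.union (hA.inter hu)) hdisj
    hsplit with hv_univ | hu_univ
  · exact Or.inr fun x _ => (hv_univ (mem_univ x)).2
  · refine Or.inl fun x hxA => ?_
    rcases hu_univ (mem_univ x) with hxB | ⟨-, hxu⟩
    exacts [hABu ⟨hxA, hxB⟩, hxu]

theorem stmt_0 {E : Type*} [MetricSpace E] [ConnectedSpace E]
    (U : Set E) (hU : IsOpen U) (p : E) (hp : p ∈ U)
    (hconn : IsPreconnected (U \ {p})) :
    IsPreconnected ({p}ᶜ : Set E) := by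
  refine isOpen_compl_singleton.isPreconnected_of_union_eq_univ hU ?_ ?_
  · simpa [eq_univ_iff_forall, or_iff_not_imp_left] using hp
  · rwa [inter_comm, ← sdiff_eq]
end
end

section
/- Let ε > 0 and let A be a nonempty bounded 2ε-chained subset of the Euclidean plane ℝ². Let D be a connected component of the complement ℝ² \ B_ε(A) of the closed ε-neighbourhood of A. Then D is a connected component of the complement ℝ² \ ∂D of its own frontier ∂D. -/
/-
A component `D` of an open subset of the locally connected plane is open and connected.
The complement of the frontier of an open set `D` is the disjoint union of the open sets `D`
and `interior Dᶜ`, so the connected set `D` is a whole component of it.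
-/

noncomputable section

theorem connectedComponentIn_compl_frontier_eq_self {X : Type*} [TopologicalSpace X]
    {D : Set X} (hDo : IsOpen D) (hD : IsPreconnected D) {x : X} (hx : x ∈ D) :
    connectedComponentIn (frontier D)ᶜ x = D := by
  have hsplit : (frontier D)ᶜ = D ∪ interior Dᶜ := by
    rw [compl_frontier_eq_union_interior, hDo.interior_eq]
  have hDF : D ⊆ (frontier D)ᶜ := (disjoint_frontier_iff_isOpen.mpr hDo).subset_compl_left
  refine Set.Subset.antisymm ?_ (hD.subset_connectedComponentIn hx hDF)
  refine isPreconnected_connectedComponentIn.subset_left_of_subset_union hDo isOpen_interior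
    (disjoint_compl_right.mono_right interior_subset) ?_ ⟨x, mem_connectedComponentIn (hDF hx), hx⟩
  exact hsplit ▸ connectedComponentIn_subset (frontier D)ᶜ x

theorem IsConnCompOf.compl_frontier {X : Type*} [TopologicalSpace X] [LocallyConnectedSpace X]
    {S D : Set X} (hS : IsOpen S) (hD : IsConnCompOf S D) : IsConnCompOf (frontier D)ᶜ D := by
  obtain ⟨x, hxS, rfl⟩ := hD
  have hDo : IsOpen (connectedComponentIn S x) := hS.connectedComponentIn
  have hx : x ∈ connectedComponentIn S x := mem_connectedComponentIn hxS
  exact ⟨x, (disjoint_frontier_iff_isOpen.mpr hDo).subset_compl_left hx,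
    connectedComponentIn_compl_frontier_eq_self hDo isPreconnected_connectedComponentIn hx⟩

theorem stmt_4_general (ε : ℝ) (A : Set Plane)
    (D : Set Plane)
    (hD : IsConnCompOf ({p : Plane | Metric.infDist p A ≤ ε}ᶜ) D) :
    IsConnCompOf ((frontier D)ᶜ) D :=
  hD.compl_frontier (isClosed_le (Metric.continuous_infDist_pt A) continuous_const).isOpen_compl

theorem stmt_4 (ε : ℝ) (hε : 0 < ε) (A : Set Plane) (hA : A.Nonempty)
    (hbdd : Bornology.IsBounded A) (hch : IsChainedSet (2 * ε) A)
    (D : Set Plane)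
    (hD : IsConnCompOf ({p : Plane | Metric.infDist p A ≤ ε}ᶜ) D) :
    IsConnCompOf ((frontier D)ᶜ) D :=
  stmt_4_general ε A D hD
end
end

section
/- Let A and B be nonempty subsets of the Euclidean plane ℝ² with ρ(A, B) > 0, where A is bounded. Then every simple closed curve C' that separates A and B satisfies ρ(C', A ∪ B) ≤ ρ(A, B)/2. -/
noncomputable section

/-! Every segment from a point of `A` to a point of `B` meets `C'`, since otherwise it would join
two different components of the complement; the meeting point is within half the segment's
length of one of its endpoints. -/

theorem setRho_le_dist {A B : Set Plane} {a b : Plane} (ha : a ∈ A) (hb : b ∈ B) :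
    setRho A B ≤ dist a b :=
  csInf_le ⟨0, by rintro _ ⟨x, -, y, -, rfl⟩; exact dist_nonneg⟩ ⟨a, ha, b, hb, rfl⟩

theorem le_setRho {A B : Set Plane} (hA : A.Nonempty) (hB : B.Nonempty) {r : ℝ}
    (h : ∀ a ∈ A, ∀ b ∈ B, r ≤ dist a b) : r ≤ setRho A B := by
  obtain ⟨a, ha⟩ := hA
  obtain ⟨b, hb⟩ := hB
  refine le_csInf ⟨dist a b, a, ha, b, hb, rfl⟩ ?_
  rintro _ ⟨x, hx, y, hy, rfl⟩
  exact h x hx y hy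

theorem segment_inter_nonempty_of_connectedComponentIn_ne {E : Type*} [AddCommGroup E]
    [Module ℝ E] [TopologicalSpace E] [ContinuousAdd E] [ContinuousSMul ℝ E]
    {C : Set E} {a b : E} (h : connectedComponentIn Cᶜ a ≠ connectedComponentIn Cᶜ b) :
    (segment ℝ a b ∩ C).Nonempty := by
  by_contra hempty
  have hsub : segment ℝ a b ⊆ Cᶜ := fun z hz hzC => hempty ⟨z, hz, hzC⟩
  have hb : b ∈ connectedComponentIn Cᶜ a :=
    (convex_segment a b).isPreconnected.subset_connectedComponentIn
      (left_mem_segment ℝ a b) hsub (right_mem_segment ℝ a b)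
  exact h (connectedComponentIn_eq hb)

theorem IsConnCompOf.connectedComponentIn_eq {X : Type*} [TopologicalSpace X] {S D : Set X}
    (hD : IsConnCompOf S D) {x : X} (hx : x ∈ D) : connectedComponentIn S x = D := by
  obtain ⟨y, -, rfl⟩ := hD
  exact (_root_.connectedComponentIn_eq hx).symm

theorem Separates.connectedComponentIn_ne {C A B : Set Plane} (hsep : Separates C A B)
    {a b : Plane} (ha : a ∈ A) (hb : b ∈ B) :
    connectedComponentIn Cᶜ a ≠ connectedComponentIn Cᶜ b := by
  obtain ⟨D, E, hD, hE, hDE, hAD, hBE⟩ := hsep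
  rwa [hD.connectedComponentIn_eq (hAD ha), hE.connectedComponentIn_eq (hBE hb)]

theorem min_dist_le_half_dist_of_mem_segment {E : Type*} [NormedAddCommGroup E]
    [NormedSpace ℝ E] {a b c : E} (hc : c ∈ segment ℝ a b) :
    min (dist c a) (dist c b) ≤ dist a b / 2 := by
  have := dist_add_dist_of_mem_segment hc
  rw [dist_comm a c] at this
  linarith [min_le_left (dist c a) (dist c b), min_le_right (dist c a) (dist c b)]

theorem stmt_10_general (A B : Set Plane) (hA : A.Nonempty) (hB : B.Nonempty)
    (C' : Set Plane) (hsep : Separates C' A B) :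
    setRho C' (A ∪ B) ≤ setRho A B / 2 := by
  suffices h : ∀ a ∈ A, ∀ b ∈ B, 2 * setRho C' (A ∪ B) ≤ dist a b by
    linarith [le_setRho hA hB h]
  intro a ha b hb
  obtain ⟨c, hc, hcC⟩ :=
    segment_inter_nonempty_of_connectedComponentIn_ne (hsep.connectedComponentIn_ne ha hb)
  have hca := setRho_le_dist hcC (Set.mem_union_left B ha)
  have hcb := setRho_le_dist hcC (Set.mem_union_right A hb)
  linarith [min_dist_le_half_dist_of_mem_segment hc, le_min hca hcb]

theorem stmt_10 (A B : Set Plane) (hA : A.Nonempty) (hB : B.Nonempty)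
    (hρ : 0 < setRho A B) (hbdd : Bornology.IsBounded A)
    (C' : Set Plane) (hC' : IsSimpleClosedCurve C') (hsep : Separates C' A B) :
    setRho C' (A ∪ B) ≤ setRho A B / 2 :=
  stmt_10_general A B hA hB C' hsep
end
end

section
/- Let ε > 0 and let A be a nonempty subset of the Euclidean plane ℝ². If A is 2ε-chained, then the open ε-neighbourhood O_ε(A) = {p ∈ ℝ² : dist(p, A) < ε} is path-connected. -/
noncomputable section

/-!
Every point of `O_ε(A)` lies within `ε` of some point of `A`, and the segment to that point stays
in `O_ε(A)`. Two consecutive points `a, b` of a `2ε`-chain are joined through their midpoint,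
which is within `ε` of both; concatenating these segments along a chain joins any two points
of `A` inside `O_ε(A)`.
-/

open Metric

section NormedSpace

variable {E : Type*} [SeminormedAddCommGroup E] [NormedSpace ℝ E] {A : Set E} {ε : ℝ}

theorem joinedIn_setOf_infDist_lt_of_dist_lt {p a : E} (ha : a ∈ A) (hpa : dist p a < ε) :
    JoinedIn {x | infDist x A < ε} p a :=
  JoinedIn.of_segment_subset fun _x hx =>
    (infDist_le_dist_of_mem ha).trans_lt <|
      (mem_closedBall.1 (segment_subset_closedBall_right p a hx)).trans_lt hpa

theorem joinedIn_setOf_infDist_lt_of_dist_lt_two_mul {a b : E} (ha : a ∈ A) (hb : b ∈ A)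
    (hab : dist a b < 2 * ε) : JoinedIn {x | infDist x A < ε} a b := by
  have hmid_a : dist (midpoint ℝ a b) a < ε := by
    rw [dist_midpoint_left, Real.norm_two]; linarith
  have hmid_b : dist (midpoint ℝ a b) b < ε := by
    rw [dist_midpoint_right, Real.norm_two]; linarith
  exact (joinedIn_setOf_infDist_lt_of_dist_lt ha hmid_a).symm.trans
    (joinedIn_setOf_infDist_lt_of_dist_lt hb hmid_b)

end NormedSpace

theorem IsChainedPts.joinedIn_setOf_infDist_lt {ε : ℝ} (hε : 0 < ε) {A : Set Plane} {p q : Plane}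
    (h : IsChainedPts (2 * ε) A p q) : JoinedIn {x | infDist x A < ε} p q := by
  obtain ⟨n, r, hrA, rfl, rfl, hstep⟩ := h
  suffices ∀ i : Fin (n + 1), JoinedIn {x | infDist x A < ε} (r 0) (r i) from this (Fin.last n)
  intro i
  induction i using Fin.induction with
  | zero => exact joinedIn_setOf_infDist_lt_of_dist_lt_two_mul (hrA 0) (hrA 0) (by simpa using hε)
  | succ i ih => exact ih.trans <|
      joinedIn_setOf_infDist_lt_of_dist_lt_two_mul (hrA _) (hrA _) (hstep i)

theorem stmt_13 (ε : ℝ) (hε : 0 < ε) (A : Set Plane) (hA : A.Nonempty)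
    (hch : IsChainedSet (2 * ε) A) :
    IsPathConnected {p : Plane | Metric.infDist p A < ε} := by
  obtain ⟨a₀, ha₀⟩ := hA
  refine ⟨a₀, (infDist_zero_of_mem ha₀).trans_lt hε, fun {p} hp => ?_⟩
  obtain ⟨a, ha, hpa⟩ := (infDist_lt_iff ⟨a₀, ha₀⟩).1 hp
  exact ((hch a₀ ha₀ a ha).joinedIn_setOf_infDist_lt hε).trans
    (joinedIn_setOf_infDist_lt_of_dist_lt ha hpa).symm
end
end

section
/- Let ε > 0 and let A be a nonempty bounded subset of the Euclidean plane ℝ². Then the closed ε-neighbourhood B_ε(A) = {p ∈ ℝ² : dist(p, A) ≤ ε}, viewed as a topological subspace of ℝ², is a compact, locally connected space. -/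
noncomputable section

/-!
`B_ε(A)` is the closed `ε`-thickening of the compact set `K = closure A`, i.e. the union of the
balls `closedBall a ε` with `a ∈ K`, hence compact. It is even locally path-connected: by
compactness of `K`, for `t > 0` there is `r > 0` such that every `a ∈ K` with
`dist p a ≤ ε + r` lies within `t` of some `a' ∈ K` with `dist p a' ≤ ε`. If `q ∈ closedBall a ε`
is within `r` of `p`, moving `p` a distance `t` towards `a'` gives a point `p'` of
`closedBall a ε`, and the segments `[p, p']` and `[p', q]`, each inside one ball, join `p` to `q`.
-/

open Metric Set Filter Topology

theorem Metric.setOf_infDist_le_eq_cthickening {α : Type*} [PseudoMetricSpace α] {s : Set α}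
    (hs : s.Nonempty) {ε : ℝ} (hε : 0 ≤ ε) : {x | infDist x s ≤ ε} = cthickening ε s := by
  ext x
  rw [mem_cthickening_iff, ENNReal.le_ofReal_iff_toReal_le (infEDist_ne_top hs) hε]
  rfl

theorem IsCompact.exists_inter_closedBall_subset_thickening {α : Type*} [PseudoMetricSpace α]
    {K : Set α} (hK : IsCompact K) (p : α) (ε : ℝ) {t : ℝ} (ht : 0 < t) :
    ∃ r > 0, K ∩ closedBall p (ε + r) ⊆ thickening t (K ∩ closedBall p ε) := by
  set C := K \ thickening t (K ∩ closedBall p ε)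
  rcases C.eq_empty_or_nonempty with hC | hC
  · exact ⟨1, one_pos, fun a ha ↦ by_contra fun h ↦ hC.subset ⟨ha.1, h⟩⟩
  obtain ⟨a₀, ha₀C, ha₀min⟩ :=
    (hK.diff isOpen_thickening).exists_isMinOn hC (continuous_const.dist continuous_id).continuousOn
  have hfar : ε < dist p a₀ := by
    by_contra! h
    exact ha₀C.2 (self_subset_thickening ht _ ⟨ha₀C.1, mem_closedBall_comm.mp h⟩)
  refine ⟨(dist p a₀ - ε) / 2, by linarith, fun a ha ↦ by_contra fun h ↦ ?_⟩
  have hle : dist p a₀ ≤ dist p a := ha₀min ⟨ha.1, h⟩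
  have := mem_closedBall_comm.mp ha.2
  rw [mem_closedBall] at this
  linarith

theorem exists_dist_le_and_dist_le_sub {E : Type*} [SeminormedAddCommGroup E] [NormedSpace ℝ E]
    {x c : E} {ε t : ℝ} (hx : dist x c ≤ ε) (ht : 0 ≤ t) (htε : t ≤ ε) :
    ∃ y, dist x y ≤ t ∧ dist y c ≤ ε - t := by
  have hscale : t / ε * ε = t := div_mul_cancel_of_imp fun h ↦ by linarith
  have hs₀ : 0 ≤ t / ε := div_nonneg ht (ht.trans htε)
  have hs₁ : t / ε ≤ 1 := div_le_one_of_le₀ htε (ht.trans htε)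
  refine ⟨AffineMap.lineMap x c (t / ε), ?_, ?_⟩
  · rw [dist_left_lineMap, Real.norm_eq_abs, abs_of_nonneg hs₀]
    calc t / ε * dist x c ≤ t / ε * ε := by gcongr
      _ = t := hscale
  · rw [dist_lineMap_right, Real.norm_eq_abs, abs_of_nonneg (by linarith)]
    calc (1 - t / ε) * dist x c ≤ (1 - t / ε) * ε := by gcongr
      _ = ε - t := by rw [sub_mul, one_mul, hscale]

theorem LocallyPathConnectedSpace.of_pathComponentIn_mem_nhdsWithin {X : Type*}
    [TopologicalSpace X] {S : Set X}
    (h : ∀ x ∈ S, ∀ U ∈ 𝓝 x, pathComponentIn (S ∩ U) x ∈ 𝓝[S] x) :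
    LocallyPathConnectedSpace S := by
  refine .of_bases (fun x : S ↦ ?_) fun x U hU ↦
    (isPathConnected_pathComponentIn (F := S ∩ U) ⟨x.2, mem_of_mem_nhds hU⟩).preimage_coe
      (pathComponentIn_subset.trans inter_subset_left)
  rw [nhds_subtype_eq_comap]
  refine ((𝓝 (x : X)).basis_sets.comap _).to_hasBasis' (fun U hU ↦ ⟨U, hU,
    preimage_mono (pathComponentIn_subset.trans inter_subset_right)⟩) fun U hU ↦ ?_
  rw [← nhds_subtype_eq_comap, mem_nhds_subtype_iff_nhdsWithin, Subtype.image_preimage_coe,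
    inter_eq_right.mpr (pathComponentIn_subset.trans inter_subset_left)]
  exact h x x.2 U hU

section Thickening

variable {E : Type*} [SeminormedAddCommGroup E] [NormedSpace ℝ E] {K : Set E} {ε : ℝ}

theorem IsCompact.eventually_joinedIn_cthickening_inter_closedBall (hK : IsCompact K)
    (hε : 0 < ε) (p : E) {δ : ℝ} (hδ : 0 < δ) :
    ∀ᶠ q in 𝓝[cthickening ε K] p, JoinedIn (cthickening ε K ∩ closedBall p δ) p q := by
  have hcenter : ∀ x ∈ cthickening ε K, ∃ a ∈ K, dist x a ≤ ε := by
    intro x hx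
    rw [hK.cthickening_eq_biUnion_closedBall hε.le] at hx
    simpa only [mem_iUnion₂, exists_prop, mem_closedBall] using hx
  have hjoin : ∀ a ∈ K, ∀ x y, dist x a ≤ ε → dist y a ≤ ε → dist x p ≤ δ → dist y p ≤ δ →
      JoinedIn (cthickening ε K ∩ closedBall p δ) x y := fun a ha x y hxa hya hxp hyp ↦
    .of_segment_subset <|
      ((convex_closedBall a ε).inter (convex_closedBall p δ)).segment_subset ⟨hxa, hxp⟩ ⟨hya, hyp⟩
        |>.trans <| inter_subset_inter_left _ (closedBall_subset_cthickening ha ε)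
  set t := min (δ / 2) ε
  have ht : 0 < t := lt_min (half_pos hδ) hε
  obtain ⟨r, hr, hrK⟩ := hK.exists_inter_closedBall_subset_thickening p ε ht
  filter_upwards [inter_mem_nhdsWithin _ (ball_mem_nhds p (lt_min hr (half_pos hδ)))]
    with q ⟨hq, hqball⟩
  obtain ⟨a, haK, hqa⟩ := hcenter q hq
  have hqp : dist q p < r ∧ dist q p < δ / 2 := lt_min_iff.mp hqball
  obtain ⟨a', ⟨ha'K, hpa'⟩, haa'⟩ := mem_thickening_iff.mp <| hrK ⟨haK, by
    rw [mem_closedBall, dist_comm]; linarith [dist_triangle p q a, dist_comm p q]⟩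
  rw [mem_closedBall, dist_comm] at hpa'
  have htε : t ≤ ε := min_le_right _ _
  have htδ : t ≤ δ / 2 := min_le_left _ _
  obtain ⟨p', hpp', hp'a'⟩ := exists_dist_le_and_dist_le_sub hpa' ht.le htε
  have hp'a : dist p' a ≤ ε := by linarith [dist_triangle p' a' a, dist_comm a a']
  have hp'p : dist p' p ≤ δ := by rw [dist_comm]; linarith
  exact (hjoin a' ha'K p p' hpa' (by linarith) (by simp [hδ.le]) hp'p).trans
    (hjoin a haK p' q hp'a hqa hp'p (by linarith))

theorem IsCompact.locallyPathConnectedSpace_cthickening (hK : IsCompact K) (hε : 0 < ε) :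
    LocallyPathConnectedSpace (cthickening ε K) :=
  .of_pathComponentIn_mem_nhdsWithin fun p _ U hU ↦ by
    obtain ⟨δ, hδ, hδU⟩ := nhds_basis_closedBall.mem_iff.mp hU
    exact mem_of_superset (hK.eventually_joinedIn_cthickening_inter_closedBall hε p hδ)
      fun q hq ↦ hq.mono (inter_subset_inter_right _ hδU)

end Thickening

theorem stmt_15 (ε : ℝ) (hε : 0 < ε) (A : Set Plane) (hA : A.Nonempty)
    (hbdd : Bornology.IsBounded A) :
    CompactSpace ({p : Plane | Metric.infDist p A ≤ ε} : Set Plane) ∧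
    LocallyConnectedSpace ({p : Plane | Metric.infDist p A ≤ ε} : Set Plane) := by
  have hK : IsCompact (closure A) := hbdd.isCompact_closure
  rw [setOf_infDist_le_eq_cthickening hA hε.le, ← cthickening_closure]
  have := hK.locallyPathConnectedSpace_cthickening hε
  exact ⟨isCompact_iff_compactSpace.mp hK.cthickening, inferInstance⟩
end
end
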